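/- Let H and H' be complex Hilbert spaces with dim H ≥ 3, and let T : H → H' be an injective semilinear map (additive and T(λx) = σ(λ)T(x) for a ring homomorphism σ : ℂ → ℂ) such that ⟨x, y⟩ = 0 implies ⟨Tx, Ty⟩ = 0 for all x, y ∈ H. If T is nonzero, then T is a nonzero scalar multiple of a linear or conjugate-linear isometry. -/

import Mathlib

/-!
Since `⟪x + y, x - y⟫ = ‖x‖² - ‖y‖²` for orthogonal `x, y`, an orthogonality-preserving additive map
`T` sends orthogonal vectors of equal length to vectors of equal length; in dimension `≥ 3` any two
vectors of equal length are orthogonal to a common third one, so `‖T x‖ = r ‖x‖`, with `r` the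
common length of the images of unit vectors, once `σ` is isometric. Applying orthogonality
preservation to the orthogonal pair `e + λ f`, `-λ̄ e + f` (for an orthonormal pair `e, f`) shows
that `σ` commutes with complex conjugation, hence fixes `ℝ`, hence is the identity or the
conjugation. Then `r⁻¹ T` is a linear or conjugate-linear isometry.
-/

open scoped ComplexConjugate InnerProductSpace

def IsLinOrConjIsometry {H H' : Type}
    [NormedAddCommGroup H] [InnerProductSpace ℂ H]
    [NormedAddCommGroup H'] [InnerProductSpace ℂ H']
    (L : H → H') : Prop :=
  (∃ T : H →ₗᵢ[ℂ] H', ∀ x, L x = T x) ∨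
  (∃ T : H →ₛₗᵢ[starRingEnd ℂ] H', ∀ x, L x = T x)

namespace Complex

theorem ringHom_eq_id_or_conj_of_map_conj (σ : ℂ →+* ℂ) (h : ∀ z, σ (conj z) = conj (σ z)) :
    σ = RingHom.id ℂ ∨ σ = starRingEnd ℂ := by
  have him (t : ℝ) : (σ t).im = 0 := by
    rw [← conj_eq_iff_im, ← h, conj_ofReal]
  -- the restriction of `σ` to `ℝ` is a ring endomorphism of `ℝ`, hence the identity
  let ρ : ℝ →+* ℝ :=
    { toFun := fun t => (σ t).re
      map_one' := by simp
      map_zero' := by simp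
      map_mul' := fun s t => by simp [mul_re, him]
      map_add' := fun s t => by simp }
  have hreal (t : ℝ) : σ t = t :=
    Complex.ext (RingHom.congr_fun (Subsingleton.elim ρ (RingHom.id ℝ)) t) (him t)
  rcases real_algHom_eq_id_or_conj { σ with commutes' := hreal } with hσ | hσ
  · exact .inl (RingHom.ext fun z => AlgHom.congr_fun hσ z)
  · exact .inr (RingHom.ext fun z => AlgHom.congr_fun hσ z)

end Complex

section Orthogonality

variable {𝕜 E F : Type*} [RCLike 𝕜] [NormedAddCommGroup E] [InnerProductSpace 𝕜 E]
  [NormedAddCommGroup F] [InnerProductSpace 𝕜 F]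

theorem exists_norm_eq_one_inner_eq_zero_pair (hdim : 2 < Module.rank 𝕜 E) (x y : E) :
    ∃ z : E, ‖z‖ = 1 ∧ ⟪x, z⟫_𝕜 = 0 ∧ ⟪y, z⟫_𝕜 = 0 := by
  set K := Submodule.span 𝕜 ({x, y} : Set E)
  have : FiniteDimensional 𝕜 K := FiniteDimensional.span_of_finite 𝕜 (Set.toFinite _)
  have hK : K ≠ ⊤ := by
    intro hK
    have : Module.rank 𝕜 K ≤ 2 :=
      (rank_span_le _).trans (Cardinal.mk_insert_le.trans (by simp; norm_num))
    rw [hK, rank_top] at this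
    exact this.not_gt hdim
  obtain ⟨z, hzK, hz⟩ := Submodule.exists_mem_ne_zero_of_ne_bot
    (mt Submodule.orthogonal_eq_bot_iff.mp hK)
  refine ⟨((‖z‖ : 𝕜))⁻¹ • z, norm_smul_inv_norm hz, ?_, ?_⟩ <;>
    rw [inner_smul_right, Submodule.inner_right_of_mem_orthogonal
      (Submodule.subset_span (by simp)) hzK, mul_zero]

theorem inner_add_sub_eq_of_inner_eq_zero {x y : E} (h : ⟪x, y⟫_𝕜 = 0) :
    ⟪x + y, x - y⟫_𝕜 = (‖x‖ : 𝕜) ^ 2 - (‖y‖ : 𝕜) ^ 2 := by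
  rw [inner_add_left, inner_sub_right, inner_sub_right, h, inner_eq_zero_symm.mp h,
    inner_self_eq_norm_sq_to_K, inner_self_eq_norm_sq_to_K]
  ring

variable (𝕜) in
def PreservesOrthogonality (f : E → F) : Prop :=
  ∀ x y, ⟪x, y⟫_𝕜 = 0 → ⟪f x, f y⟫_𝕜 = 0

variable {σ : 𝕜 →+* 𝕜} {f : E →ₛₗ[σ] F}

theorem LinearMap.exists_norm_eq_one_apply_ne_zero (hf : f ≠ 0) :
    ∃ e : E, ‖e‖ = 1 ∧ f e ≠ 0 := by
  obtain ⟨x, hx⟩ := DFunLike.ne_iff.mp hf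
  have hx0 : x ≠ 0 := by rintro rfl; exact hx (map_zero f)
  refine ⟨((‖x‖ : 𝕜))⁻¹ • x, norm_smul_inv_norm hx0, ?_⟩
  rw [map_smulₛₗ]
  exact smul_ne_zero ((map_ne_zero σ).mpr (by simpa using hx0)) hx

namespace PreservesOrthogonality

variable (hf : PreservesOrthogonality 𝕜 f)
include hf

theorem norm_map_eq {x y : E} (hxy : ⟪x, y⟫_𝕜 = 0) (hn : ‖x‖ = ‖y‖) : ‖f x‖ = ‖f y‖ := by
  have h := hf _ _ ((inner_add_sub_eq_of_inner_eq_zero hxy).trans (by rw [hn, sub_self]))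
  rw [map_add, map_sub, inner_add_sub_eq_of_inner_eq_zero (hf x y hxy), sub_eq_zero] at h
  exact (pow_left_inj₀ (norm_nonneg _) (norm_nonneg _) two_ne_zero).mp (by exact_mod_cast h)

theorem norm_map_eq_of_norm_eq (hdim : 2 < Module.rank 𝕜 E) {x y : E} (hn : ‖x‖ = ‖y‖) :
    ‖f x‖ = ‖f y‖ := by
  obtain ⟨z, hz, hxz, hyz⟩ := exists_norm_eq_one_inner_eq_zero_pair hdim x y
  have hw : ‖((‖x‖ : 𝕜)) • z‖ = ‖x‖ := by simp [norm_smul, hz]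
  rw [hf.norm_map_eq (by rw [inner_smul_right, hxz, mul_zero]) hw.symm,
    hf.norm_map_eq (by rw [inner_smul_right, hyz, mul_zero]) (hw.trans hn).symm]

theorem norm_map_eq_mul_norm [RingHomIsometric σ] (hdim : 2 < Module.rank 𝕜 E) {e : E}
    (he : ‖e‖ = 1) (x : E) : ‖f x‖ = ‖f e‖ * ‖x‖ := by
  have hw : ‖((‖x‖ : 𝕜)) • e‖ = ‖x‖ := by simp [norm_smul, he]
  rw [hf.norm_map_eq_of_norm_eq hdim hw.symm, map_smulₛₗ, norm_smul, RingHomIsometric.norm_map,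
    RCLike.norm_ofReal, abs_norm, mul_comm]

theorem ringHom_map_conj {e e' : E} (hn : ‖e‖ = ‖e'‖) (hee' : ⟪e, e'⟫_𝕜 = 0) (hfe : f e ≠ 0) (l : 𝕜) :
    σ (conj l) = conj (σ l) := by
  have hfn := hf.norm_map_eq hee' hn
  have h : ⟪e + l • e', -(conj l) • e + e'⟫_𝕜 = 0 := by
    rw [inner_add_left, inner_add_right, inner_add_right, inner_smul_left, inner_smul_left,
      inner_smul_right, inner_smul_right, hee', inner_eq_zero_symm.mp hee',
      inner_self_eq_norm_sq_to_K, inner_self_eq_norm_sq_to_K, hn]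
    ring
  have hf' := hf _ _ h
  rw [map_add, map_add, map_smulₛₗ, map_smulₛₗ, map_neg, inner_add_left, inner_add_right,
    inner_add_right, inner_smul_left, inner_smul_left, inner_smul_right, inner_smul_right,
    hf e e' hee', hf e' e (inner_eq_zero_symm.mp hee'), inner_self_eq_norm_sq_to_K,
    inner_self_eq_norm_sq_to_K, hfn] at hf'
  have hfe' : (‖f e'‖ : 𝕜) ^ 2 ≠ 0 := by
    rw [← hfn]; exact pow_ne_zero _ (RCLike.ofReal_ne_zero.mpr (norm_ne_zero_iff.mpr hfe))
  have h0 : (conj (σ l) - σ (conj l)) * (‖f e'‖ : 𝕜) ^ 2 = 0 := by linear_combination hf'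
  exact (sub_eq_zero.mp ((mul_eq_zero.mp h0).resolve_right hfe')).symm

end PreservesOrthogonality

theorem LinearMap.exists_linearIsometry_smul {r : ℝ} (hr : 0 < r) (h : ∀ x, ‖f x‖ = r * ‖x‖) :
    ∃ L : E →ₛₗᵢ[σ] F, ∀ x, f x = (r : 𝕜) • L x := by
  have hr' : (r : 𝕜) ≠ 0 := RCLike.ofReal_ne_zero.mpr hr.ne'
  refine ⟨⟨(r : 𝕜)⁻¹ • f, fun x => ?_⟩, fun x => ?_⟩
  · rw [LinearMap.smul_apply, norm_smul, h, norm_inv, RCLike.norm_ofReal, abs_of_pos hr,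
      inv_mul_cancel_left₀ hr.ne']
  · rw [LinearIsometry.coe_mk, LinearMap.smul_apply, smul_inv_smul₀ hr']

end Orthogonality

theorem stmt18_general {H H' : Type}
    [NormedAddCommGroup H] [InnerProductSpace ℂ H]
    [NormedAddCommGroup H'] [InnerProductSpace ℂ H']
    (hdim : 3 ≤ Module.rank ℂ H)
    (T : H → H') (σ : ℂ →+* ℂ)
    (hadd : ∀ x y : H, T (x + y) = T x + T y)
    (hsmul : ∀ (c : ℂ) (x : H), T (c • x) = σ c • T x)
    (horth : ∀ x y : H, inner ℂ x y = (0 : ℂ) → inner ℂ (T x) (T y) = (0 : ℂ))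
    (hT : T ≠ 0) :
    ∃ (c : ℂ) (L : H → H'), c ≠ 0 ∧ IsLinOrConjIsometry L ∧ ∀ x : H, T x = c • L x := by
  let f : H →ₛₗ[σ] H' := { toFun := T, map_add' := hadd, map_smul' := hsmul }
  have hf : PreservesOrthogonality ℂ f := horth
  have hdim' : 2 < Module.rank ℂ H := lt_of_lt_of_le (by norm_num) hdim
  obtain ⟨e, he, hfe⟩ := f.exists_norm_eq_one_apply_ne_zero fun h => hT (congrArg DFunLike.coe h)
  obtain ⟨e', he', hee', -⟩ := exists_norm_eq_one_inner_eq_zero_pair hdim' e e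
  have hr : 0 < ‖f e‖ := norm_pos_iff.mpr hfe
  have hc : ((‖f e‖ : ℝ) : ℂ) ≠ 0 := Complex.ofReal_ne_zero.mpr hr.ne'
  rcases Complex.ringHom_eq_id_or_conj_of_map_conj σ
    (hf.ringHom_map_conj (he.trans he'.symm) hee' hfe) with rfl | rfl
  · obtain ⟨L, hL⟩ := f.exists_linearIsometry_smul hr (hf.norm_map_eq_mul_norm hdim' he)
    exact ⟨_, L, hc, .inl ⟨L, fun _ => rfl⟩, hL⟩
  · obtain ⟨L, hL⟩ := f.exists_linearIsometry_smul hr (hf.norm_map_eq_mul_norm hdim' he)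
    exact ⟨_, L, hc, .inr ⟨L, fun _ => rfl⟩, hL⟩

/-- an injective, orthogonality-preserving, nonzero semilinear map
between complex Hilbert spaces (with `dim H ≥ 3`) is a nonzero scalar multiple of a
linear or conjugate-linear isometry. -/
theorem stmt18 {H H' : Type}
    [NormedAddCommGroup H] [InnerProductSpace ℂ H] [CompleteSpace H]
    [NormedAddCommGroup H'] [InnerProductSpace ℂ H'] [CompleteSpace H']
    (hdim : 3 ≤ Module.rank ℂ H)
    (T : H → H') (σ : ℂ →+* ℂ)
    (hadd : ∀ x y : H, T (x + y) = T x + T y)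
    (hsmul : ∀ (c : ℂ) (x : H), T (c • x) = σ c • T x)
    (hinj : Function.Injective T)
    (horth : ∀ x y : H, inner ℂ x y = (0 : ℂ) → inner ℂ (T x) (T y) = (0 : ℂ))
    (hT : T ≠ 0) :
    ∃ (c : ℂ) (L : H → H'), c ≠ 0 ∧ IsLinOrConjIsometry L ∧ ∀ x : H, T x = c • L x :=
  stmt18_general hdim T σ hadd hsmul horth hT
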